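/- arXiv:2107.04985 — 2 statements merged into one kernel-verified Lean document; each statement's English description precedes it below -/
import Mathlib

section
/- Let X be a geodesic hyperbolic metric space and let Y ⊆ X be a subspace with the induced path metric, such that the inclusion ι : Y → X admits a Cannon-Thurston map in the strong sense. If Y is itself geodesic and hyperbolic, then the induced boundary map ∂ι : ∂Y → ∂X is well defined: if (yₙ) and (y'ₙ) are equivalent Gromov sequences in Y, then (ι(yₙ)) and (ι(y'ₙ)) are equivalent Gromov sequences in X. -/
open Filter Metric

/-- `S` is the image of a geodesic segment from `a` to `b`. -/
def IsGeodesic {X : Type*} [MetricSpace X] (S : Set X) (a b : X) : Prop :=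
  ∃ γ : ℝ → X, γ 0 = a ∧ γ (dist a b) = b ∧ S = γ '' Set.Icc 0 (dist a b) ∧
    ∀ s ∈ Set.Icc (0:ℝ) (dist a b), ∀ t ∈ Set.Icc (0:ℝ) (dist a b),
      dist (γ s) (γ t) = |s - t|

/-- A geodesic metric space: any two points are joined by a geodesic segment. -/
def GeodesicSpace (X : Type*) [MetricSpace X] : Prop :=
  ∀ a b : X, ∃ S : Set X, IsGeodesic S a b

/-- The Gromov product of `a` and `b` with respect to `p`. -/
noncomputable def gp {X : Type*} [MetricSpace X] (p a b : X) : ℝ :=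
  (dist p a + dist p b - dist a b) / 2

/-- `X` is δ-hyperbolic in the sense of the four-point inequality. -/
def IsHyperbolic (X : Type*) [MetricSpace X] (δ : ℝ) : Prop :=
  ∀ p a b c : X, min (gp p a b) (gp p b c) - δ ≤ gp p a c

/-- `f : Y → X` admits a Cannon–Thurston map in the strong sense with respect to
the basepoint `y₀` and the function `M` : `M N → ∞`, and for every geodesic
segment `λ` of `Y` lying outside `B(y₀, N)`, every geodesic of `X` joining the
endpoints of `f(λ)` lies outside `B(f y₀, M N)`. -/
def StrongCT {Y X : Type*} [MetricSpace Y] [MetricSpace X]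
    (f : Y → X) (y₀ : Y) (M : ℕ → ℝ) : Prop :=
  Tendsto M atTop atTop ∧
  ∀ (N : ℕ) (a b : Y) (S : Set Y), IsGeodesic S a b →
    (∀ y ∈ S, (N : ℝ) < dist y₀ y) →
    ∀ T : Set X, IsGeodesic T (f a) (f b) →
      ∀ x ∈ T, M N < dist (f y₀) x

/-- `u` is a Gromov sequence based at `p`: the Gromov products `(u m, u n)_p`
tend to infinity. -/
def GSeq {X : Type*} [MetricSpace X] (p : X) (u : ℕ → X) : Prop :=
  Tendsto (fun q : ℕ × ℕ => gp p (u q.1) (u q.2)) atTop atTop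

/-- Two sequences are equivalent (converge to the same boundary point) if the
mixed Gromov products `(u m, v n)_p` tend to infinity. -/
def GEquiv {X : Type*} [MetricSpace X] (p : X) (u v : ℕ → X) : Prop :=
  Tendsto (fun q : ℕ × ℕ => gp p (u q.1) (v q.2)) atTop atTop

/-- Any point on a geodesic from `a` to `b` is at distance at least `(a,b)_p` from `p`. -/
lemma gp_le_dist_of_mem_geodesic {Y : Type*} [MetricSpace Y] (p : Y) {a b : Y} {S : Set Y}
    (hS : IsGeodesic S a b) {y : Y} (hy : y ∈ S) : gp p a b ≤ dist p y := by
  obtain ⟨γ, h0, hD, hSe, hiso⟩ := hS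
  rw [hSe] at hy
  obtain ⟨t, ht, rfl⟩ := hy
  have h1 : dist a (γ t) = t := by
    have h := hiso 0 ⟨le_refl _, dist_nonneg⟩ t ht
    rw [h0, abs_of_nonpos (by linarith [ht.1] : (0:ℝ) - t ≤ 0)] at h
    linarith
  have h2 : dist (γ t) b = dist a b - t := by
    have h := hiso t ht (dist a b) ⟨dist_nonneg, le_refl _⟩
    rw [hD, abs_of_nonpos (by linarith [ht.2] : t - dist a b ≤ 0)] at h
    linarith
  have t1 := dist_triangle p (γ t) a
  have t2 := dist_triangle p (γ t) b
  have c1 : dist (γ t) a = dist a (γ t) := dist_comm _ _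
  have c2 : dist b (γ t) = dist (γ t) b := dist_comm _ _
  unfold gp
  linarith

/-- In a hyperbolic geodesic space, each geodesic from `a` to `b` contains a point
within `(a,b)_p + 2δ` of `p`. -/
lemma exists_near_gp {X : Type*} [MetricSpace X] {δ : ℝ} (hX : IsHyperbolic X δ)
    (p : X) {a b : X} {T : Set X} (hT : IsGeodesic T a b) :
    ∃ x ∈ T, dist p x ≤ gp p a b + 2 * δ := by
  obtain ⟨γ, h0, hD, hSe, hiso⟩ := hT
  set t : ℝ := (dist p a - dist p b + dist a b) / 2 with htdef
  have htri1 := dist_triangle p b a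
  have htri2 := dist_triangle p a b
  have cab : dist b a = dist a b := dist_comm _ _
  have ht0 : 0 ≤ t := by rw [htdef]; linarith
  have htD : t ≤ dist a b := by rw [htdef]; linarith
  refine ⟨γ t, by rw [hSe]; exact ⟨t, ⟨ht0, htD⟩, rfl⟩, ?_⟩
  have h1 : dist a (γ t) = t := by
    have h := hiso 0 ⟨le_refl _, dist_nonneg⟩ t ⟨ht0, htD⟩
    rw [h0, abs_of_nonpos (by linarith : (0:ℝ) - t ≤ 0)] at h
    linarith
  have h2 : dist (γ t) b = dist a b - t := by
    have h := hiso t ⟨ht0, htD⟩ (dist a b) ⟨dist_nonneg, le_refl _⟩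
    rw [hD, abs_of_nonpos (by linarith : t - dist a b ≤ 0)] at h
    linarith
  have hmin := hX p a (γ t) b
  have heq : gp p a (γ t) = gp p (γ t) b := by
    unfold gp; linarith
  rw [heq, min_self] at hmin
  unfold gp at hmin ⊢
  linarith

/-- if the inclusion of a subspace (with a dominating path metric)
admits a strong Cannon–Thurston map, the induced boundary map is well defined:
equivalent Gromov sequences map to equivalent Gromov sequences. -/
theorem strongCT_boundary_well_defined {Y X : Type*} [MetricSpace Y] [MetricSpace X]
    (ι : Y → X) (hinj : Function.Injective ι)
    (hpath : ∀ y y' : Y, dist (ι y) (ι y') ≤ dist y y')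
    (hYgeo : GeodesicSpace Y) (hXgeo : GeodesicSpace X)
    {δY δX : ℝ} (hYhyp : IsHyperbolic Y δY) (hXhyp : IsHyperbolic X δX)
    (y₀ : Y) (M : ℕ → ℝ) (hCT : StrongCT ι y₀ M)
    (u v : ℕ → Y) (hu : GSeq y₀ u) (hv : GSeq y₀ v) (huv : GEquiv y₀ u v) :
    GSeq (ι y₀) (ι ∘ u) ∧ GSeq (ι y₀) (ι ∘ v) ∧
      GEquiv (ι y₀) (ι ∘ u) (ι ∘ v) := by
  have key : ∀ (N : ℕ) (a b : Y), (N : ℝ) < gp y₀ a b →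
      M N - 2 * δX ≤ gp (ι y₀) (ι a) (ι b) := by
    intro N a b hN
    obtain ⟨S, hS⟩ := hYgeo a b
    obtain ⟨T, hT⟩ := hXgeo (ι a) (ι b)
    have hout : ∀ y ∈ S, (N : ℝ) < dist y₀ y := fun y hy =>
      lt_of_lt_of_le hN (gp_le_dist_of_mem_geodesic y₀ hS hy)
    have hfar := hCT.2 N a b S hS hout T hT
    obtain ⟨x, hxT, hx⟩ := exists_near_gp hXhyp (ι y₀) hT
    have := hfar x hxT
    linarith
  have final : ∀ w w' : ℕ → Y, GEquiv y₀ w w' → GEquiv (ι y₀) (ι ∘ w) (ι ∘ w') := by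
    intro w w' hw
    rw [GEquiv, Filter.tendsto_atTop]
    intro C
    obtain ⟨N, hN⟩ := (hCT.1.eventually_ge_atTop (C + 2 * δX)).exists
    filter_upwards [(Filter.tendsto_atTop.1 hw) ((N : ℝ) + 1)] with q hq
    have := key N (w q.1) (w' q.2) (by linarith)
    simp only [Function.comp_apply]
    linarith
  exact ⟨final u u hu, final v v hv, final u v huv⟩
end

section
/- Let G act by isometries on a geodesic hyperbolic metric space X acylindrically, and suppose some element g ∈ G acts loxodromically (i.e., the orbit map n ↦ gⁿ·x₀ is a quasi-isometric embedding of ℤ). Then the centralizer of g in G is virtually cyclic. -/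
open Filter Metric

/-- An acylindrical action: for every `ε ≥ 0` there are `R`, `N` such that for
points at distance at least `R`, at most `N` group elements move both points at
most `ε`. -/
def Acylindrical (Γ : Type*) (X : Type*) [Group Γ] [MetricSpace X]
    [MulAction Γ X] : Prop :=
  ∀ ε : ℝ, 0 ≤ ε → ∃ (R : ℝ) (N : ℕ), ∀ x y : X, R ≤ dist x y →
    {g : Γ | dist x (g • x) ≤ ε ∧ dist y (g • y) ≤ ε}.Finite ∧
    Nat.card {g : Γ | dist x (g • x) ≤ ε ∧ dist y (g • y) ≤ ε} ≤ N

/-! Let `h` commute with `g` and choose it of minimal displacement `D = d(x, h x)` in its coset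
`⟨g⟩ h`. If `a` is a power of `g` with `d(x, a x) ≤ D`, the four-point condition applied to
`x, a x, a h x, h x` and to `h x, a⁻¹ x, x, a x` gives `d(x, a² x) ≤ d(x, a x) + 4δ`. Iterating
along `a = g^(2^k)`, if `D` were large then `d(x, g^(2^K) x)` would grow only linearly in `K`,
against the linear lower bound of the loxodromic `g`. So each coset of `⟨g⟩` in the centralizer
has a representative moving `x` a bounded amount; such an element also moves the far-away point
`g^n x` by the same amount, and acylindricity leaves only finitely many of them. -/

lemma IsHyperbolic.nonneg {X : Type*} [MetricSpace X] {δ : ℝ} (hX : IsHyperbolic X δ) (p : X) :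
    0 ≤ δ := by
  simpa [gp] using hX p p p p

lemma IsHyperbolic.dist_add_dist_le {X : Type*} [MetricSpace X] {δ : ℝ} (hX : IsHyperbolic X δ)
    (w x y z : X) :
    dist w y + dist x z ≤ max (dist w z + dist x y) (dist w x + dist y z) + 2 * δ := by
  have H := hX w x y z
  simp only [gp, min_def] at H
  split_ifs at H <;> linarith [le_max_left (dist w z + dist x y) (dist w x + dist y z),
    le_max_right (dist w z + dist x y) (dist w x + dist y z)]

lemma exists_add_mul_lt_two_pow (a b : ℝ) : ∃ K : ℕ, a + b * K < 2 ^ K := by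
  have h2K : Tendsto (fun K : ℕ => (2 : ℝ) ^ K) atTop atTop :=
    tendsto_pow_atTop_atTop_of_one_lt one_lt_two
  have hlim : Tendsto (fun K : ℕ => (a + b * K) / 2 ^ K) atTop (nhds 0) := by
    have hK := (tendsto_pow_const_div_const_pow_of_one_lt 1 one_lt_two).const_mul b
    simp only [pow_one, mul_zero] at hK
    simpa [add_div, mul_div_assoc] using (tendsto_const_nhds.div_atTop h2K).add hK
  obtain ⟨K, hK⟩ := (hlim.eventually (gt_mem_nhds one_pos)).exists
  exact ⟨K, (div_lt_one (by positivity)).1 hK⟩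

lemma tendsto_cofinite_atTop_of_abs_div_sub_le {f : ℤ → ℝ} {l c : ℝ} (hl : 0 < l)
    (hf : ∀ n : ℤ, |(n : ℝ)| / l - c ≤ f n) : Tendsto f cofinite atTop := by
  have habs : Tendsto (fun n : ℤ => |(n : ℝ)|) cofinite atTop := by
    simpa only [Function.comp_def, Real.norm_eq_abs] using
      tendsto_norm_cocompact_atTop.comp Int.tendsto_coe_cofinite
  exact tendsto_atTop_mono hf (tendsto_atTop_add_const_right _ _ (habs.atTop_div_const hl))

lemma Subgroup.finiteIndex_of_forall_exists_mul_mem {G : Type*} [Group G] (H : Subgroup G)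
    {S : Set G} (hS : S.Finite) (hcover : ∀ z : G, ∃ h ∈ H, z * h ∈ S) : H.FiniteIndex := by
  have hsurj : Set.SurjOn (QuotientGroup.mk : G → G ⧸ H) S Set.univ := by
    rintro q -
    obtain ⟨z, rfl⟩ := QuotientGroup.mk_surjective q
    obtain ⟨h, hh, hzh⟩ := hcover z
    exact ⟨z * h, hzh, QuotientGroup.eq.2 (by simpa using H.inv_mem hh)⟩
  have := Set.finite_univ_iff.1 (hS.of_surjOn _ hsurj)
  exact H.finiteIndex_of_finite_quotient

section IsometricAction

variable {Γ X : Type*} [Group Γ] [MetricSpace X] [MulAction Γ X] [IsIsometricSMul Γ X]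

lemma IsHyperbolic.dist_mul_self_smul_le {δ : ℝ} (hX : IsHyperbolic X δ) {a h : Γ}
    (hah : Commute a h) {x : X} (hax : dist x (a • x) ≤ dist x (h • x))
    (hmin : dist x (h • x) ≤ dist x ((a * h) • x))
    (hmin' : dist x (h • x) ≤ dist x ((a⁻¹ * h) • x)) :
    dist x ((a * a) • x) ≤ dist x (a • x) + 4 * δ := by
  have e₁ : dist (a • x) ((a * h) • x) = dist x (h • x) := by rw [mul_smul, dist_smul]
  have e₂ : dist ((a * h) • x) (h • x) = dist x (a • x) := by
    rw [hah.eq, mul_smul, dist_smul, dist_comm]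
  have e₃ : dist (a • x) (h • x) = dist x ((a⁻¹ * h) • x) := by
    rw [← dist_smul a⁻¹, inv_smul_smul, mul_smul]
  have e₄ : dist (a⁻¹ • x) (a • x) = dist x ((a * a) • x) := by
    rw [← dist_smul a, smul_inv_smul, mul_smul]
  have e₅ : dist (a⁻¹ • x) x = dist x (a • x) := by
    rw [← dist_smul a, smul_inv_smul, dist_comm]
  have e₆ : dist (h • x) (a⁻¹ • x) = dist x ((a * h) • x) := by
    rw [← dist_smul a, smul_inv_smul, ← mul_smul, hah.eq, dist_comm]
  have F₁ := hX.dist_add_dist_le x (a • x) ((a * h) • x) (h • x)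
  rw [e₁, e₂, e₃, max_eq_left (by linarith)] at F₁
  have F₂ := hX.dist_add_dist_le (h • x) (a⁻¹ • x) x (a • x)
  rw [e₄, e₅, e₆, dist_comm (h • x) x, dist_comm (h • x) (a • x), e₃, max_add_add_right] at F₂
  have hle : dist x ((a * h) • x) ≤ dist x (h • x) + 2 * δ := by linarith
  have hle' : dist x ((a⁻¹ * h) • x) ≤ dist x (h • x) + 2 * δ := by linarith
  linarith [max_le hle' hle]

lemma IsHyperbolic.dist_pow_two_pow_smul_le {δ : ℝ} (hX : IsHyperbolic X δ) {g h : Γ}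
    (hgh : Commute g h) {x : X} (hmin : ∀ n : ℤ, dist x (h • x) ≤ dist x ((g ^ n * h) • x))
    {K : ℕ} (hK : dist x (g • x) + 4 * δ * K ≤ dist x (h • x)) :
    dist x ((g ^ 2 ^ K) • x) ≤ dist x (g • x) + 4 * δ * K := by
  have hδ := hX.nonneg x
  induction K with
  | zero => simp
  | succ k ih =>
    push_cast at hK
    have hk := ih (by linarith)
    have hstep := hX.dist_mul_self_smul_le (hgh.pow_left (2 ^ k)) (by linarith)
      (by simpa only [zpow_natCast] using hmin (2 ^ k : ℕ))
      (by simpa only [zpow_neg, zpow_natCast] using hmin (-(2 ^ k : ℕ)))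
    rw [pow_succ, pow_mul, sq]
    push_cast
    linarith

lemma exists_forall_dist_zpow_mul_smul_le {g : Γ} {x : X}
    (hg : Tendsto (fun n : ℤ => dist x (g ^ n • x)) cofinite atTop) (h : Γ) :
    ∃ t : ℤ, ∀ n : ℤ, dist x ((g ^ t * h) • x) ≤ dist x ((g ^ n * h) • x) := by
  refine Tendsto.exists_forall_le (tendsto_atTop_mono (fun n => ?_)
    (tendsto_atTop_add_const_right _ (-dist x (h • x)) hg))
  have hmove : dist ((g ^ n * h) • x) (g ^ n • x) = dist x (h • x) := by
    rw [mul_smul, dist_smul, dist_comm]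
  linarith [dist_triangle x ((g ^ n * h) • x) (g ^ n • x)]

lemma IsHyperbolic.exists_forall_commute_exists_dist_zpow_mul_smul_le {δ : ℝ}
    (hX : IsHyperbolic X δ) {g : Γ} {x : X} {l c : ℝ} (hl : 0 < l)
    (hlb : ∀ n : ℤ, |(n : ℝ)| / l - c ≤ dist x (g ^ n • x)) :
    ∃ B : ℝ, ∀ h : Γ, Commute g h → ∃ t : ℤ, dist x ((g ^ t * h) • x) ≤ B := by
  obtain ⟨K, hK⟩ := exists_add_mul_lt_two_pow (l * (dist x (g • x) + c)) (l * (4 * δ))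
  refine ⟨dist x (g • x) + 4 * δ * K, fun h hgh => ?_⟩
  obtain ⟨t, ht⟩ := exists_forall_dist_zpow_mul_smul_le
    (tendsto_cofinite_atTop_of_abs_div_sub_le hl hlb) h
  refine ⟨t, le_of_not_gt fun hlarge => ?_⟩
  have hmin : ∀ n : ℤ, dist x ((g ^ t * h) • x) ≤ dist x ((g ^ n * (g ^ t * h)) • x) :=
    fun n => by simpa only [← mul_assoc, ← zpow_add] using ht (n + t)
  have hup := hX.dist_pow_two_pow_smul_le (((Commute.refl g).zpow_right t).mul_right hgh)
    hmin hlarge.le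
  have hlow := hlb (2 ^ K : ℕ)
  rw [zpow_natCast, Int.cast_natCast, Nat.cast_pow, Nat.cast_ofNat,
    abs_of_nonneg (by positivity)] at hlow
  have := (div_le_iff₀' hl).1 (show (2 : ℝ) ^ K / l ≤ dist x (g • x) + 4 * δ * K + c by linarith)
  linarith

lemma Acylindrical.finite_setOf_commute_dist_le (hacyl : Acylindrical Γ X) {g : Γ} {x : X}
    (hg : Tendsto (fun n : ℤ => dist x (g ^ n • x)) cofinite atTop) (ε : ℝ) :
    {γ : Γ | Commute g γ ∧ dist x (γ • x) ≤ ε}.Finite := by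
  obtain ⟨R, N, hRN⟩ := hacyl (max ε 0) (le_max_right _ _)
  obtain ⟨n, hn⟩ := (hg.eventually_ge_atTop R).exists
  refine (hRN x (g ^ n • x) hn).1.subset fun γ ⟨hγ, hd⟩ => ?_
  have hmove : dist (g ^ n • x) (γ • g ^ n • x) = dist x (γ • x) := by
    rw [smul_smul, ← (hγ.zpow_left n).eq, mul_smul, dist_smul]
  exact ⟨hd.trans (le_max_left _ _), hmove ▸ hd.trans (le_max_left _ _)⟩

end IsometricAction

theorem centralizer_loxodromic_virtually_cyclic_general {Γ X : Type*} [Group Γ]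
    [MetricSpace X] [MulAction Γ X]
    (hiso : ∀ g : Γ, Isometry (fun x : X => g • x))
    {δ : ℝ} (hhyp : IsHyperbolic X δ)
    (hacyl : Acylindrical Γ X)
    (g : Γ) (x₀ : X)
    (hlox : ∃ (l c : ℝ), 1 ≤ l ∧ 0 ≤ c ∧ ∀ m n : ℤ,
      (|(m : ℝ) - n|) / l - c ≤ dist ((g ^ m) • x₀) ((g ^ n) • x₀) ∧
      dist ((g ^ m) • x₀) ((g ^ n) • x₀) ≤ l * |(m : ℝ) - n| + c) :
    ∃ C : Subgroup (Subgroup.centralizer {g}), IsCyclic C ∧ C.FiniteIndex := by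
  have : IsIsometricSMul Γ X := ⟨hiso⟩
  obtain ⟨l, c, hl, -, hqi⟩ := hlox
  have hl₀ : 0 < l := by linarith
  have hlb : ∀ n : ℤ, |(n : ℝ)| / l - c ≤ dist x₀ (g ^ n • x₀) := fun n => by
    simpa using (hqi 0 n).1
  obtain ⟨B, hB⟩ := hhyp.exists_forall_commute_exists_dist_zpow_mul_smul_le hl₀ hlb
  have hfin := hacyl.finite_setOf_commute_dist_le
    (tendsto_cofinite_atTop_of_abs_div_sub_le hl₀ hlb) B
  let g' : Subgroup.centralizer {g} := ⟨g, Subgroup.mem_centralizer_singleton_iff.2 rfl⟩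
  refine ⟨Subgroup.zpowers g', inferInstance,
    (Subgroup.zpowers g').finiteIndex_of_forall_exists_mul_mem
      (hfin.preimage Subtype.val_injective.injOn) fun z => ?_⟩
  have hz : Commute g z := (Subgroup.mem_centralizer_singleton_iff.1 z.2).symm
  obtain ⟨t, ht⟩ := hB z hz
  refine ⟨g' ^ t, Subgroup.zpow_mem_zpowers g' t, ?_, ?_⟩
  · exact hz.mul_right ((Commute.refl g).zpow_right t)
  · simpa [g', (hz.zpow_left t).eq] using ht

/-- if `Γ` acts acylindrically by isometries on a geodesic
hyperbolic space and `g` is loxodromic, then the centralizer of `g` is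
virtually cyclic. -/
theorem centralizer_loxodromic_virtually_cyclic {Γ X : Type*} [Group Γ]
    [MetricSpace X] [MulAction Γ X]
    (hiso : ∀ g : Γ, Isometry (fun x : X => g • x))
    (hgeo : GeodesicSpace X) {δ : ℝ} (hhyp : IsHyperbolic X δ)
    (hacyl : Acylindrical Γ X)
    (g : Γ) (x₀ : X)
    (hlox : ∃ (l c : ℝ), 1 ≤ l ∧ 0 ≤ c ∧ ∀ m n : ℤ,
      (|(m : ℝ) - n|) / l - c ≤ dist ((g ^ m) • x₀) ((g ^ n) • x₀) ∧
      dist ((g ^ m) • x₀) ((g ^ n) • x₀) ≤ l * |(m : ℝ) - n| + c) :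
    ∃ C : Subgroup (Subgroup.centralizer {g}), IsCyclic C ∧ C.FiniteIndex :=
  centralizer_loxodromic_virtually_cyclic_general hiso hhyp hacyl g x₀ hlox
end
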